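/- arXiv:1505.01122 — 3 statements merged into one kernel-verified Lean document; each statement's English description precedes it below -/
import Mathlib

section
/- Let n ≥ 1 be an integer, p > 1, ρ > 0 and x₀ ∈ ℝⁿ. Let f be twice continuously differentiable on an open neighborhood of the closed ball of radius ρ centered at x₀, with |∇f(x)| > 0 for every x in that closed ball. Then for every continuously differentiable function ξ : ℝⁿ → ℝ with compact support contained in B_ρ(x₀): ∫_{B_ρ(x₀)} |∇f|^{p+2} ξ² dx ≤ 2(√n + p)² (osc_{B_ρ(x₀)} f)² ∫_{B_ρ(x₀)} [ |∇f|^{p−2} |∇²f|² ξ² + |∇f|^p |∇ξ|² ] dx, where osc_{B_ρ(x₀)} f = sup_{x ∈ B_ρ(x₀)} |f(x) − f(x₀)|. -/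
/-!
For `V = ξ² |∇f|ᵖ ∇f` one has `⟪∇f, V⟫ = |∇f|^(p+2) ξ²`, so integrating by parts against
`f - f x₀` gives `∫ |∇f|^(p+2) ξ² = -∫ (f - f x₀) div V ≤ osc f · ∫ |div V|`. Pointwise,
`div V = ⟪∇(ξ² |∇f|ᵖ), ∇f⟫ + ξ² |∇f|ᵖ Δf`, and `|Δf| ≤ √n |∇²f|`, `|∇|∇f|| ≤ |∇²f|` bound it by
`2 |ξ| |∇f|^(p+1) |∇ξ| + (√n + p) ξ² |∇f|ᵖ |∇²f|`. By Cauchy–Schwarz each of the two resulting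
integrals is at most `(∫ |∇f|^(p+2) ξ²)^(1/2)` times the square root of one term of the right-hand
side; absorbing that factor and using `(a + b)² ≤ 2a² + 2b²` and `2 ≤ √n + p` gives the claim.
-/

open MeasureTheory Metric Real
open scoped InnerProductSpace Topology

noncomputable section

/-- `ℝⁿ` with the Euclidean norm. -/
abbrev Esp (n : ℕ) := EuclideanSpace ℝ (Fin n)

/-- The `k`-th standard basis vector of `ℝⁿ`. -/
def eb (n : ℕ) (k : Fin n) : Esp n := EuclideanSpace.single k (1 : ℝ)

/-- Frobenius norm `|∇²u|` of the Hessian of `u`. -/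
def hessNorm (n : ℕ) (u : Esp n → ℝ) (x : Esp n) : ℝ :=
  Real.sqrt (∑ i : Fin n, ∑ j : Fin n,
    (fderiv ℝ (fun y => fderiv ℝ u y (eb n j)) x (eb n i)) ^ 2)

theorem ContinuousOn.integrable_of_support_subset {X G : Type*} [TopologicalSpace X]
    [MeasurableSpace X] [OpensMeasurableSpace X] [T2Space X] [NormedAddCommGroup G]
    {μ : Measure X} [IsFiniteMeasureOnCompacts μ] {h : X → G} {K : Set X}
    (hh : ContinuousOn h K) (hK : IsCompact K) (hs : Function.support h ⊆ K) :
    Integrable h μ :=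
  (integrableOn_iff_integrable_of_support_subset hs).1 (hh.integrableOn_compact hK)

theorem ContinuousOn.memLp_restrict_of_isCompact {X G : Type*} [TopologicalSpace X]
    [MeasurableSpace X] [OpensMeasurableSpace X] [NormedAddCommGroup G]
    [SecondCountableTopologyEither X G] {μ : Measure X} [IsFiniteMeasureOnCompacts μ]
    {h : X → G} {K s : Set X} (hh : ContinuousOn h K) (hK : IsCompact K) (hs : MeasurableSet s)
    (hsK : s ⊆ K) (q : ENNReal) : MemLp h q (μ.restrict s) := by
  have : IsFiniteMeasure (μ.restrict s) :=
    ⟨by rw [Measure.restrict_apply_univ]; exact (measure_mono hsK).trans_lt hK.measure_lt_top⟩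
  obtain ⟨C, hC⟩ := hK.exists_bound_of_continuousOn hh
  exact MemLp.of_bound ((hh.mono hsK).aestronglyMeasurable hs) C
    (ae_restrict_of_forall_mem hs fun x hx => hC x (hsK hx))

theorem le_biSup_of_continuousOn {X : Type*} [TopologicalSpace X] {g : X → ℝ} {s K : Set X}
    (hK : IsCompact K) (hsK : s ⊆ K) (hg : ContinuousOn g K) {x : X} (hx : x ∈ s) :
    g x ≤ ⨆ y ∈ s, g y := by
  obtain ⟨C, hC⟩ := hK.bddAbove_image hg
  have hbdd : BddAbove (Set.range fun y => ⨆ _ : y ∈ s, g y) := by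
    refine ⟨max C 0, Set.forall_mem_range.2 fun y => ?_⟩
    by_cases hy : y ∈ s
    · rw [ciSup_pos hy]; exact (hC ⟨y, hsK hy, rfl⟩).trans (le_max_left _ _)
    · simp [hy]
  exact (ciSup_pos hx).ge.trans (le_ciSup hbdd x)

theorem integral_rpow_mul_abs_mul_le {α : Type*} [MeasurableSpace α] {μ : Measure α}
    {N a b : α → ℝ} {r s t : ℝ} (hrst : r + s = 2 * t) (hN : ∀ᵐ x ∂μ, 0 < N x)
    (ha : MemLp (fun x => N x ^ (r / 2) * a x) 2 μ)
    (hb : MemLp (fun x => N x ^ (s / 2) * b x) 2 μ) :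
    ∫ x, N x ^ t * |a x * b x| ∂μ
      ≤ √(∫ x, N x ^ r * a x ^ 2 ∂μ) * √(∫ x, N x ^ s * b x ^ 2 ∂μ) := by
  have hsq : ∀ (q c : ℝ) (x : α), 0 < N x →
      ‖N x ^ (q / 2) * c‖ ^ (2 : ℝ) = N x ^ q * c ^ 2 := by
    intro q c x hx
    rw [rpow_two, norm_mul, mul_pow, Real.norm_eq_abs, Real.norm_eq_abs, sq_abs, sq_abs,
      ← rpow_natCast, ← rpow_mul hx.le]
    norm_num
  have hprod : ∀ᵐ x ∂μ,
      N x ^ t * |a x * b x| = ‖N x ^ (r / 2) * a x‖ * ‖N x ^ (s / 2) * b x‖ :=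
    hN.mono fun x hx => by
      rw [norm_mul, norm_mul, Real.norm_of_nonneg (rpow_nonneg hx.le _),
        Real.norm_of_nonneg (rpow_nonneg hx.le _), Real.norm_eq_abs, Real.norm_eq_abs, abs_mul,
        show t = r / 2 + s / 2 by linarith, rpow_add hx]
      ring
  calc ∫ x, N x ^ t * |a x * b x| ∂μ
      = ∫ x, ‖N x ^ (r / 2) * a x‖ * ‖N x ^ (s / 2) * b x‖ ∂μ :=
        integral_congr_ae hprod
    _ ≤ (∫ x, ‖N x ^ (r / 2) * a x‖ ^ (2 : ℝ) ∂μ) ^ (1 / 2 : ℝ)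
          * (∫ x, ‖N x ^ (s / 2) * b x‖ ^ (2 : ℝ) ∂μ) ^ (1 / 2 : ℝ) :=
        integral_mul_norm_le_Lp_mul_Lq Real.HolderConjugate.two_two (by simpa using ha)
          (by simpa using hb)
    _ = √(∫ x, N x ^ r * a x ^ 2 ∂μ) * √(∫ x, N x ^ s * b x ^ 2 ∂μ) := by
        rw [integral_congr_ae (hN.mono fun x hx => hsq r (a x) x hx),
          integral_congr_ae (hN.mono fun x hx => hsq s (b x) x hx), ← sqrt_eq_rpow,
          ← sqrt_eq_rpow]

theorem le_two_mul_sq_mul_add_of_le_mul_sqrt {I A B M c : ℝ} (hI : 0 ≤ I) (hA : 0 ≤ A)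
    (hB : 0 ≤ B) (hM : 0 ≤ M) (hc : 2 ≤ c) (h : I ≤ M * (2 * √B + c * √A) * √I) :
    I ≤ 2 * c ^ 2 * M ^ 2 * (A + B) := by
  set a := M * (2 * √B + c * √A)
  have ha : 0 ≤ a := by positivity
  have hIa : √I ≤ a := by
    rcases (Real.sqrt_nonneg I).eq_or_lt with h0 | hpos
    · rw [← h0]; exact ha
    · exact le_of_mul_le_mul_right (by rwa [Real.mul_self_sqrt hI]) hpos
  have hc4 : 4 ≤ c ^ 2 := by nlinarith
  calc I = √I ^ 2 := (Real.sq_sqrt hI).symm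
    _ ≤ a ^ 2 := by gcongr
    _ ≤ M ^ 2 * (2 * (2 * √B) ^ 2 + 2 * (c * √A) ^ 2) := by
        rw [mul_pow]; gcongr; nlinarith [sq_nonneg (2 * √B - c * √A)]
    _ = 2 * M ^ 2 * (4 * B + c ^ 2 * A) := by
        rw [mul_pow, mul_pow, Real.sq_sqrt hA, Real.sq_sqrt hB]; ring
    _ ≤ 2 * c ^ 2 * M ^ 2 * (A + B) := by nlinarith [mul_nonneg (sq_nonneg M) hB]

theorem tsupport_sq_mul_rpow_smul_subset {X F : Type*} [TopologicalSpace X]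
    [NormedAddCommGroup F] [NormedSpace ℝ F] (ξ : X → ℝ) (G : X → F) (p : ℝ) :
    tsupport (fun y => (ξ y ^ 2 * ‖G y‖ ^ p) • G y) ⊆ tsupport ξ :=
  closure_mono fun x hx => by
    contrapose! hx
    simp [Function.notMem_support.1 hx]

section VectorCalculus

variable {E F : Type*} [NormedAddCommGroup E] [InnerProductSpace ℝ E]
  [NormedAddCommGroup F] [InnerProductSpace ℝ F] {ι : Type*} [Fintype ι]

theorem gradient_sub_const [CompleteSpace E] (f : E → ℝ) (c : ℝ) :
    gradient (fun y => f y - c) = gradient f := by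
  ext1 x
  simp [gradient, fderiv_sub_const]

theorem ContDiffOn.gradient_of_isOpen [CompleteSpace E] {f : E → ℝ} {O : Set E}
    {m k : WithTop ℕ∞} (hf : ContDiffOn ℝ k f O) (hO : IsOpen O) (hmk : m + 1 ≤ k) :
    ContDiffOn ℝ m (gradient f) O :=
  (InnerProductSpace.toDual ℝ E).symm.contDiff.comp_contDiffOn (hf.fderiv_of_isOpen hO hmk)

def divergence (V : E → E) (x : E) : ℝ := LinearMap.trace ℝ E (fderiv ℝ V x)

theorem divergence_eq_sum_inner (b : OrthonormalBasis ι ℝ E) (V : E → E) (x : E) :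
    divergence V x = ∑ i, ⟪b i, fderiv ℝ V x (b i)⟫_ℝ :=
  LinearMap.trace_eq_sum_inner _ b

theorem divergence_eq_zero_of_notMem_tsupport {V : E → E} {x : E} (hx : x ∉ tsupport V) :
    divergence V x = 0 := by
  simp [divergence, fderiv_of_notMem_tsupport ℝ hx]

theorem divergence_smul [FiniteDimensional ℝ E] {ψ : E → ℝ} {W : E → E} {x : E}
    (hψ : DifferentiableAt ℝ ψ x) (hW : DifferentiableAt ℝ W x) :
    divergence (fun y => ψ y • W y) x = fderiv ℝ ψ x (W x) + ψ x * divergence W x := by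
  rw [divergence, divergence, fderiv_fun_smul hψ hW]
  simp [add_comm, LinearMap.trace_smulRight]

theorem ContinuousLinearMap.norm_apply_le_sqrt_sum_norm_sq (b : OrthonormalBasis ι ℝ E)
    (L : E →L[ℝ] F) (v : E) : ‖L v‖ ≤ √(∑ i, ‖L (b i)‖ ^ 2) * ‖v‖ := by
  calc ‖L v‖ = ‖∑ i, ⟪b i, v⟫_ℝ • L (b i)‖ := by
        conv_lhs => rw [← b.sum_repr' v]
        simp [map_sum, map_smul]
    _ ≤ ∑ i, |⟪b i, v⟫_ℝ| * ‖L (b i)‖ := by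
        refine (norm_sum_le _ _).trans_eq ?_
        simp [norm_smul]
    _ ≤ √(∑ i, ⟪b i, v⟫_ℝ ^ 2) * √(∑ i, ‖L (b i)‖ ^ 2) := by
        simpa using Real.sum_mul_le_sqrt_mul_sqrt Finset.univ (fun i => |⟪b i, v⟫_ℝ|)
          (fun i => ‖L (b i)‖)
    _ = √(∑ i, ‖L (b i)‖ ^ 2) * ‖v‖ := by
        rw [mul_comm, b.sum_sq_inner_right, Real.sqrt_sq (norm_nonneg v)]

theorem abs_trace_le_sqrt_card_mul_sqrt_sum_norm_sq (b : OrthonormalBasis ι ℝ E)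
    (L : E →L[ℝ] E) :
    |LinearMap.trace ℝ E L| ≤ √(Fintype.card ι) * √(∑ i, ‖L (b i)‖ ^ 2) := by
  rw [LinearMap.trace_eq_sum_inner _ b]
  calc |∑ i, ⟪b i, L (b i)⟫_ℝ| ≤ ∑ i, 1 * ‖L (b i)‖ := by
        refine (Finset.abs_sum_le_sum_abs _ _).trans (Finset.sum_le_sum fun i _ => ?_)
        simpa using abs_real_inner_le_norm (b i) (L (b i))
    _ ≤ √(∑ _i : ι, 1 ^ 2) * √(∑ i, ‖L (b i)‖ ^ 2) :=
        Real.sum_mul_le_sqrt_mul_sqrt _ _ _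
    _ = √(Fintype.card ι) * √(∑ i, ‖L (b i)‖ ^ 2) := by simp

theorem abs_fderiv_norm_rpow_apply_le {G : E → F} {x : E} (hG : DifferentiableAt ℝ G x)
    {p : ℝ} (hp : 1 < p) (v : E) :
    |fderiv ℝ (fun y => ‖G y‖ ^ p) x v|
      ≤ p * ‖G x‖ ^ (p - 1) * ‖fderiv ℝ G x v‖ := by
  have hD : HasFDerivAt (fun y => ‖G y‖ ^ p)
      (((p * ‖G x‖ ^ (p - 2)) • innerSL ℝ (G x)).comp (fderiv ℝ G x)) x :=
    (hasFDerivAt_norm_rpow (G x) hp).comp x hG.hasFDerivAt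
  rw [hD.fderiv]
  simp only [ContinuousLinearMap.comp_apply, smul_apply, innerSL_apply_apply, smul_eq_mul]
  have hN : ‖G x‖ ^ (p - 2) * ‖G x‖ = ‖G x‖ ^ (p - 1) := by
    rw [← rpow_add_one' (norm_nonneg _) (by linarith)]; ring_nf
  calc |(p * ‖G x‖ ^ (p - 2)) * ⟪G x, fderiv ℝ G x v⟫_ℝ|
      ≤ (p * ‖G x‖ ^ (p - 2)) * (‖G x‖ * ‖fderiv ℝ G x v‖) := by
        rw [abs_mul, abs_of_nonneg (by positivity)]
        gcongr
        exact abs_real_inner_le_norm _ _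
    _ = p * ‖G x‖ ^ (p - 1) * ‖fderiv ℝ G x v‖ := by rw [← hN]; ring

theorem abs_divergence_sq_mul_rpow_smul_le [FiniteDimensional ℝ E] (b : OrthonormalBasis ι ℝ E)
    {ξ : E → ℝ} {G : E → E} {x : E} (hξ : DifferentiableAt ℝ ξ x)
    (hG : DifferentiableAt ℝ G x) {p : ℝ} (hp : 1 < p) :
    |divergence (fun y => (ξ y ^ 2 * ‖G y‖ ^ p) • G y) x|
      ≤ 2 * |ξ x| * ‖G x‖ ^ (p + 1) * ‖gradient ξ x‖
        + (√(Fintype.card ι) + p)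
          * (ξ x ^ 2 * ‖G x‖ ^ p * √(∑ i, ‖fderiv ℝ G x (b i)‖ ^ 2)) := by
  set N := ‖G x‖
  set S := √(∑ i, ‖fderiv ℝ G x (b i)‖ ^ 2)
  have hNp : DifferentiableAt ℝ (fun y => ‖G y‖ ^ p) x :=
    ((contDiff_norm_rpow hp).differentiable one_ne_zero (G x)).comp x hG
  have hψ : DifferentiableAt ℝ (fun y => ξ y ^ 2 * ‖G y‖ ^ p) x := (hξ.pow 2).mul hNp
  have hdψ : fderiv ℝ (fun y => ξ y ^ 2 * ‖G y‖ ^ p) x (G x)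
      = 2 * ξ x * fderiv ℝ ξ x (G x) * N ^ p
        + ξ x ^ 2 * fderiv ℝ (fun y => ‖G y‖ ^ p) x (G x) := by
    rw [fderiv_fun_mul (hξ.fun_pow 2) hNp, fderiv_fun_pow 2 hξ]
    simp only [add_apply, smul_apply, smul_eq_mul]
    ring
  have hξG : |fderiv ℝ ξ x (G x)| ≤ ‖gradient ξ x‖ * N := by
    rw [← inner_gradient_left]; exact abs_real_inner_le_norm _ _
  have hNpG : |fderiv ℝ (fun y => ‖G y‖ ^ p) x (G x)| ≤ p * (N ^ p * S) := by
    refine (abs_fderiv_norm_rpow_apply_le hG hp (G x)).trans ?_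
    calc p * N ^ (p - 1) * ‖fderiv ℝ G x (G x)‖ ≤ p * N ^ (p - 1) * (S * N) := by
          gcongr; exact (fderiv ℝ G x).norm_apply_le_sqrt_sum_norm_sq b (G x)
      _ = p * (N ^ (p - 1) * N * S) := by ring
      _ = p * (N ^ p * S) := by
          rw [← rpow_add_one' (norm_nonneg _) (by linarith), sub_add_cancel]
  have hdivG : |divergence G x| ≤ √(Fintype.card ι) * S :=
    abs_trace_le_sqrt_card_mul_sqrt_sum_norm_sq b (fderiv ℝ G x)
  have hNp0 : 0 ≤ N ^ p := rpow_nonneg (norm_nonneg _) p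
  have hN1 : N ^ p * N = N ^ (p + 1) := (rpow_add_one' (norm_nonneg _) (by linarith)).symm
  rw [divergence_smul hψ hG, hdψ]
  calc |2 * ξ x * fderiv ℝ ξ x (G x) * N ^ p
        + ξ x ^ 2 * fderiv ℝ (fun y => ‖G y‖ ^ p) x (G x)
        + ξ x ^ 2 * N ^ p * divergence G x|
      ≤ 2 * |ξ x| * |fderiv ℝ ξ x (G x)| * N ^ p
        + ξ x ^ 2 * |fderiv ℝ (fun y => ‖G y‖ ^ p) x (G x)|
        + ξ x ^ 2 * N ^ p * |divergence G x| := by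
        refine (abs_add_three _ _ _).trans_eq ?_
        rw [abs_mul, abs_mul, abs_mul, abs_mul, abs_mul, abs_mul, abs_two, abs_sq,
          abs_of_nonneg hNp0]
    _ ≤ 2 * |ξ x| * (‖gradient ξ x‖ * N) * N ^ p + ξ x ^ 2 * (p * (N ^ p * S))
        + ξ x ^ 2 * N ^ p * (√(Fintype.card ι) * S) := by gcongr
    _ = _ := by rw [← hN1]; ring

end VectorCalculus

section IntegrationByParts

variable {E : Type*} [NormedAddCommGroup E] [InnerProductSpace ℝ E] [FiniteDimensional ℝ E]
  [MeasurableSpace E] [BorelSpace E] {μ : Measure E} [μ.IsAddHaarMeasure]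

theorem integral_inner_gradient_eq_neg_integral_mul_divergence {O : Set E} (hO : IsOpen O)
    {g : E → ℝ} {V : E → E} (hg : ContDiffOn ℝ 1 g O) (hV : ContDiffOn ℝ 1 V O)
    (hVc : HasCompactSupport V) (hVO : tsupport V ⊆ O) :
    ∫ x, ⟪gradient g x, V x⟫_ℝ ∂μ = -∫ x, g x * divergence V x ∂μ := by
  let b := stdOrthonormalBasis ℝ E
  have hint : ∀ {F : E → E}, ContinuousOn F O → Function.support F ⊆ tsupport V →
      Integrable F μ := fun hF => (hF.mono hVO).integrable_of_support_subset hVc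
  have hVd : ∀ x, DifferentiableAt ℝ V x := fun x => by
    by_cases hx : x ∈ O
    · exact (hV.differentiableOn one_ne_zero x hx).differentiableAt (hO.mem_nhds hx)
    · exact (HasFDerivAt.of_notMem_tsupport ℝ fun h => hx (hVO h)).differentiableAt
  have hgd : ∀ x ∈ tsupport V, DifferentiableAt ℝ g x := fun x hx =>
    (hg.differentiableOn one_ne_zero x (hVO hx)).differentiableAt (hO.mem_nhds (hVO hx))
  have hsuppV : Function.support V ⊆ tsupport V := subset_tsupport V
  have hI₁ : ∀ i, Integrable (fun x => fderiv ℝ g x (b i) • V x) μ := fun i =>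
    hint (((hg.continuousOn_fderiv_of_isOpen hO le_rfl).clm_apply continuousOn_const).smul
      hV.continuousOn) ((Function.support_smul_subset_right _ _).trans hsuppV)
  have hI₂ : ∀ i, Integrable (fun x => g x • fderiv ℝ V x (b i)) μ := fun i =>
    hint (hg.continuousOn.smul
      ((hV.continuousOn_fderiv_of_isOpen hO le_rfl).clm_apply continuousOn_const))
      ((Function.support_smul_subset_right _ _).trans fun x hx =>
        support_fderiv_subset ℝ fun h => hx (by simp [h]))
  have hibp : ∀ i,
      ∫ x, fderiv ℝ g x (b i) • V x ∂μ = -∫ x, g x • fderiv ℝ V x (b i) ∂μ :=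
    fun i => neg_eq_iff_eq_neg.1 (integral_smul_fderiv_eq_neg_fderiv_smul_of_integrable (hI₁ i)
      (hI₂ i) (hint (hg.continuousOn.smul hV.continuousOn)
        ((Function.support_smul_subset_right _ _).trans hsuppV))
      hgd (fun x _ => hVd x)).symm
  calc ∫ x, ⟪gradient g x, V x⟫_ℝ ∂μ
        = ∫ x, ∑ i, ⟪b i, fderiv ℝ g x (b i) • V x⟫_ℝ ∂μ := by
        congr 1 with x
        conv_lhs => rw [inner_gradient_left, ← b.sum_repr' (V x)]
        simp [inner_smul_right, mul_comm]
    _ = ∑ i, ⟪b i, ∫ x, fderiv ℝ g x (b i) • V x ∂μ⟫_ℝ := by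
        rw [integral_finsetSum _ fun i _ => (hI₁ i).const_inner (b i)]
        simp_rw [integral_inner (hI₁ _)]
    _ = -∫ x, ∑ i, ⟪b i, g x • fderiv ℝ V x (b i)⟫_ℝ ∂μ := by
        rw [integral_finsetSum _ fun i _ => (hI₂ i).const_inner (b i), ← Finset.sum_neg_distrib]
        simp_rw [integral_inner (hI₂ _), hibp, inner_neg_right]
    _ = -∫ x, g x * divergence V x ∂μ := by
        simp_rw [divergence_eq_sum_inner b, inner_smul_right, Finset.mul_sum]

theorem integral_rpow_mul_sq_eq_neg_integral_mul_divergence {p : ℝ} (hp : 1 < p) {O : Set E}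
    (hO : IsOpen O) {f ξ : E → ℝ} (hf : ContDiffOn ℝ 2 f O) (hξ : ContDiff ℝ 1 ξ)
    (hcs : HasCompactSupport ξ) (hξO : tsupport ξ ⊆ O) (c : ℝ) :
    ∫ x, ‖gradient f x‖ ^ (p + 2) * ξ x ^ 2 ∂μ
      = -∫ x, (f x - c)
          * divergence (fun y => (ξ y ^ 2 * ‖gradient f y‖ ^ p) • gradient f y) x ∂μ := by
  have hG : ContDiffOn ℝ 1 (gradient f) O := hf.gradient_of_isOpen hO le_rfl
  have hVξ := tsupport_sq_mul_rpow_smul_subset ξ (gradient f) p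
  rw [← integral_inner_gradient_eq_neg_integral_mul_divergence
    (V := fun y => (ξ y ^ 2 * ‖gradient f y‖ ^ p) • gradient f y) hO
    ((hf.of_le one_le_two).sub contDiffOn_const)
    (((hξ.contDiffOn.pow 2).mul ((contDiff_norm_rpow hp).comp_contDiffOn hG)).smul hG)
    (hcs.of_isClosed_subset (isClosed_tsupport _) hVξ) (hVξ.trans hξO)]
  congr 1 with x
  rw [gradient_sub_const, real_inner_smul_right, real_inner_self_eq_norm_sq,
    rpow_add' (norm_nonneg _) (by linarith), rpow_two]
  ring

end IntegrationByParts

theorem hessNorm_nonneg (n : ℕ) (u : Esp n → ℝ) (x : Esp n) : 0 ≤ hessNorm n u x :=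
  Real.sqrt_nonneg _

theorem hessNorm_eq {n : ℕ} {u : Esp n → ℝ} {x : Esp n}
    (hu : DifferentiableAt ℝ (gradient u) x) :
    hessNorm n u x = √(∑ i, ‖fderiv ℝ (gradient u) x (eb n i)‖ ^ 2) := by
  have hcoord : ∀ j,
      (fun y => fderiv ℝ u y (eb n j)) = EuclideanSpace.proj j ∘ gradient u := by
    intro j; ext y
    simp [← inner_gradient_left, eb, EuclideanSpace.inner_single_right]
  simp_rw [hessNorm, hcoord, fderiv_comp x (EuclideanSpace.proj _).differentiableAt hu,
    ContinuousLinearMap.fderiv, EuclideanSpace.real_norm_sq_eq]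
  simp

theorem ContDiffOn.continuousOn_hessNorm {n : ℕ} {u : Esp n → ℝ} {O : Set (Esp n)}
    (hu : ContDiffOn ℝ 2 u O) (hO : IsOpen O) : ContinuousOn (hessNorm n u) O := by
  have hG := hu.gradient_of_isOpen hO (m := 1) le_rfl
  refine ContinuousOn.congr
    (f := fun x => √(∑ i, ‖fderiv ℝ (gradient u) x (eb n i)‖ ^ 2)) ?_ fun x hx =>
      hessNorm_eq ((hG.differentiableOn one_ne_zero x hx).differentiableAt (hO.mem_nhds hx))
  exact (continuousOn_finsetSum _ fun i _ =>
    ((hG.continuousOn_fderiv_of_isOpen hO le_rfl).clm_apply continuousOn_const).norm.pow 2).sqrt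

theorem abs_divergence_sq_mul_rpow_smul_gradient_le {n : ℕ} {p : ℝ} (hp : 1 < p) {f ξ : Esp n → ℝ}
    {x : Esp n} (hf : DifferentiableAt ℝ (gradient f) x) (hξ : DifferentiableAt ℝ ξ x) :
    |divergence (fun y => (ξ y ^ 2 * ‖gradient f y‖ ^ p) • gradient f y) x|
      ≤ 2 * (‖gradient f x‖ ^ (p + 1) * |‖gradient ξ x‖ * ξ x|)
        + (√n + p) * (‖gradient f x‖ ^ p * |hessNorm n f x * ξ x * ξ x|) := by
  have h := abs_divergence_sq_mul_rpow_smul_le (EuclideanSpace.basisFun (Fin n) ℝ) hξ hf hp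
  simp only [EuclideanSpace.basisFun_apply, Fintype.card_fin, ← eb.eq_def, ← hessNorm_eq hf]
    at h
  refine h.trans_eq ?_
  simp only [abs_mul, abs_norm, abs_of_nonneg (hessNorm_nonneg n f x), mul_assoc,
    abs_mul_abs_self]
  ring

theorem setIntegral_rpow_mul_sq_le_mul_add {n : ℕ} {p : ℝ} (hp : 1 < p) {O Ω : Set (Esp n)}
    (hO : IsOpen O) {f ξ : Esp n → ℝ} (hf : ContDiffOn ℝ 2 f O) (hξ : ContDiff ℝ 1 ξ)
    (hcs : HasCompactSupport ξ) (hξO : tsupport ξ ⊆ O) (hξΩ : tsupport ξ ⊆ Ω) {c M : ℝ}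
    (hM0 : 0 ≤ M) (hM : ∀ x ∈ tsupport ξ, |f x - c| ≤ M) :
    ∫ x in Ω, ‖gradient f x‖ ^ (p + 2) * ξ x ^ 2
      ≤ M * (2 * (∫ x in Ω, ‖gradient f x‖ ^ (p + 1) * |‖gradient ξ x‖ * ξ x|)
        + (√n + p) * ∫ x in Ω, ‖gradient f x‖ ^ p * |hessNorm n f x * ξ x * ξ x|) := by
  set V : Esp n → Esp n := fun y => (ξ y ^ 2 * ‖gradient f y‖ ^ p) • gradient f y
  set X : Esp n → ℝ := fun x => ‖gradient f x‖ ^ (p + 1) * |‖gradient ξ x‖ * ξ x|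
  set Y : Esp n → ℝ := fun x => ‖gradient f x‖ ^ p * |hessNorm n f x * ξ x * ξ x|
  have hξ0 : ∀ x ∉ tsupport ξ, ξ x = 0 := fun x hx => image_eq_zero_of_notMem_tsupport hx
  have hG : ContDiffOn ℝ 1 (gradient f) O := hf.gradient_of_isOpen hO le_rfl
  have hdiv : ∀ x, |f x - c| * |divergence V x| ≤ M * (2 * X x + (√n + p) * Y x) := by
    intro x
    by_cases hx : x ∈ tsupport ξ
    · exact mul_le_mul (hM x hx) (abs_divergence_sq_mul_rpow_smul_gradient_le hp
        ((hG.differentiableOn one_ne_zero x (hξO hx)).differentiableAt (hO.mem_nhds (hξO hx)))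
        (hξ.differentiable one_ne_zero x)) (abs_nonneg _) hM0
    · rw [divergence_eq_zero_of_notMem_tsupport
        fun h => hx (tsupport_sq_mul_rpow_smul_subset ξ (gradient f) p h), abs_zero, mul_zero]
      positivity
  have hint : ∀ {h : Esp n → ℝ}, ContinuousOn h O → (∀ x, ξ x = 0 → h x = 0) →
      Integrable h := fun hh h0 =>
    (hh.mono hξO).integrable_of_support_subset hcs fun x hx => by
      by_contra h; exact hx (h0 x (hξ0 x h))
  have hN : ∀ q : ℝ, 0 < q → ContinuousOn (fun x => ‖gradient f x‖ ^ q) O := fun q hq =>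
    hG.continuousOn.norm.rpow_const (p := q) fun _ _ => Or.inr hq.le
  have hgradξ : Continuous (gradient ξ) :=
    (InnerProductSpace.toDual ℝ _).symm.continuous.comp (hξ.continuous_fderiv one_ne_zero)
  have hX : Integrable X := hint ((hN _ (by linarith)).mul
    ((hgradξ.norm.mul hξ.continuous).abs.continuousOn)) fun x hx => by simp [X, hx]
  have hY : Integrable Y := hint ((hN _ (by linarith)).mul
    (((hf.continuousOn_hessNorm hO).mul hξ.continuous.continuousOn).mul
      hξ.continuous.continuousOn).abs) fun x hx => by simp [Y, hx]
  have hΩ : ∀ {h : Esp n → ℝ}, (∀ x, ξ x = 0 → h x = 0) →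
      ∫ x in Ω, h x = ∫ x, h x :=
    fun h0 => setIntegral_eq_integral_of_forall_compl_eq_zero fun x hx =>
      h0 x (hξ0 x fun h => hx (hξΩ h))
  rw [hΩ (h := X) fun x hx => by simp [X, hx], hΩ (h := Y) fun x hx => by simp [Y, hx],
    hΩ fun x hx => by simp [hx], integral_rpow_mul_sq_eq_neg_integral_mul_divergence hp hO hf hξ
      hcs hξO c]
  calc -∫ x, (f x - c) * divergence V x ≤ ∫ x, |f x - c| * |divergence V x| :=
        (neg_le_abs _).trans (abs_integral_le_integral_abs.trans_eq (by simp_rw [abs_mul]))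
    _ ≤ ∫ x, M * (2 * X x + (√n + p) * Y x) :=
        integral_mono_of_nonneg (ae_of_all _ fun x => by positivity)
          (((hX.const_mul 2).add (hY.const_mul _)).const_mul M) (ae_of_all _ hdiv)
    _ = M * (2 * (∫ x, X x) + (√n + p) * ∫ x, Y x) := by
        rw [integral_const_mul, integral_add (hX.const_mul 2) (hY.const_mul _), integral_const_mul,
          integral_const_mul]

theorem setIntegral_rpow_mul_sq_le_of_abs_sub_le {n : ℕ} (hn : 1 ≤ n) {p : ℝ} (hp : 1 < p)
    {O K Ω : Set (Esp n)} (hO : IsOpen O) (hK : IsCompact K) (hKO : K ⊆ O)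
    (hΩ : MeasurableSet Ω) (hΩK : Ω ⊆ K) {f ξ : Esp n → ℝ} (hf : ContDiffOn ℝ 2 f O)
    (hgrad : ∀ x ∈ K, gradient f x ≠ 0) (hξ : ContDiff ℝ 1 ξ) (hcs : HasCompactSupport ξ)
    (hξΩ : tsupport ξ ⊆ Ω) {c M : ℝ} (hM0 : 0 ≤ M)
    (hM : ∀ x ∈ tsupport ξ, |f x - c| ≤ M) :
    ∫ x in Ω, ‖gradient f x‖ ^ (p + 2) * ξ x ^ 2
      ≤ 2 * (√n + p) ^ 2 * M ^ 2 * ∫ x in Ω,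
          (‖gradient f x‖ ^ (p - 2) * hessNorm n f x ^ 2 * ξ x ^ 2
            + ‖gradient f x‖ ^ p * ‖gradient ξ x‖ ^ 2) := by
  have hest := setIntegral_rpow_mul_sq_le_mul_add hp hO hf hξ hcs
    (hξΩ.trans (hΩK.trans hKO)) hξΩ hM0 hM
  have hL2 : ∀ {h : Esp n → ℝ}, ContinuousOn h K → MemLp h 2 (volume.restrict Ω) :=
    fun hh => hh.memLp_restrict_of_isCompact hK hΩ hΩK 2
  have hint : ∀ {h : Esp n → ℝ}, ContinuousOn h K → IntegrableOn h Ω := fun hh =>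
    (hh.integrableOn_compact hK).mono_set hΩK
  -- `q` may be negative: this is where `∇f ≠ 0` on `K` is needed
  have hN : ∀ q : ℝ, ContinuousOn (fun x => ‖gradient f x‖ ^ q) K := fun q =>
    ((hf.gradient_of_isOpen hO (m := 1) le_rfl).continuousOn.mono hKO).norm.rpow_const
      fun x hx => Or.inl (norm_ne_zero_iff.2 (hgrad x hx))
  have hH := (hf.continuousOn_hessNorm hO).mono hKO
  have hgradξ : ContinuousOn (gradient ξ) K :=
    (hξ.contDiffOn.gradient_of_isOpen isOpen_univ (m := 0) le_rfl).continuousOn.mono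
      (Set.subset_univ _)
  have hpos : ∀ᵐ x ∂(volume.restrict Ω), 0 < ‖gradient f x‖ :=
    ae_restrict_of_forall_mem hΩ fun x hx => norm_pos_iff.2 (hgrad x (hΩK hx))
  have hξL2 := hL2 ((hN ((p + 2) / 2)).mul hξ.continuous.continuousOn)
  have hX := integral_rpow_mul_abs_mul_le (t := p + 1) (by ring) hpos
    (hL2 ((hN (p / 2)).mul hgradξ.norm)) hξL2
  have hY := integral_rpow_mul_abs_mul_le (a := fun x => hessNorm n f x * ξ x) (t := p) (by ring)
    hpos (hL2 ((hN ((p - 2) / 2)).mul (hH.mul hξ.continuous.continuousOn))) hξL2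
  simp_rw [mul_pow, ← mul_assoc] at hY
  rw [integral_add (f := fun x => ‖gradient f x‖ ^ (p - 2) * hessNorm n f x ^ 2 * ξ x ^ 2)
    (g := fun x => ‖gradient f x‖ ^ p * ‖gradient ξ x‖ ^ 2)
    (hint (((hN _).mul (hH.pow 2)).mul (hξ.continuous.continuousOn.pow 2)))
    (hint ((hN _).mul (hgradξ.norm.pow 2)))]
  refine le_two_mul_sq_mul_add_of_le_mul_sqrt (setIntegral_nonneg hΩ fun x _ => by positivity)
    (setIntegral_nonneg hΩ fun x _ => by positivity)
    (setIntegral_nonneg hΩ fun x _ => by positivity) hM0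
    (by have := Real.one_le_sqrt.2 (Nat.one_le_cast.2 hn : (1 : ℝ) ≤ n); linarith) ?_
  set I := ∫ x in Ω, ‖gradient f x‖ ^ (p + 2) * ξ x ^ 2
  set A := ∫ x in Ω, ‖gradient f x‖ ^ (p - 2) * hessNorm n f x ^ 2 * ξ x ^ 2
  set B := ∫ x in Ω, ‖gradient f x‖ ^ p * ‖gradient ξ x‖ ^ 2
  calc I ≤ _ := hest
    _ ≤ M * (2 * (√B * √I) + (√n + p) * (√A * √I)) := by gcongr
    _ = _ := by ring

theorem statement7_general (n : ℕ) (hn : 1 ≤ n) (p ρ : ℝ) (hp : 1 < p)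
    (x₀ : Esp n) (f : Esp n → ℝ) (U : Set (Esp n)) (hU : IsOpen U)
    (hsub : closedBall x₀ ρ ⊆ U) (hf : ContDiffOn ℝ 2 f U)
    (hgrad : ∀ x ∈ closedBall x₀ ρ, gradient f x ≠ 0)
    (ξ : Esp n → ℝ) (hξ : ContDiff ℝ 1 ξ) (hcs : HasCompactSupport ξ)
    (hsupp : tsupport ξ ⊆ ball x₀ ρ) :
    (∫ x in ball x₀ ρ, ‖gradient f x‖ ^ (p + 2) * ξ x ^ 2)
      ≤ 2 * (Real.sqrt n + p) ^ 2 * (⨆ x ∈ ball x₀ ρ, |f x - f x₀|) ^ 2 *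
        ∫ x in ball x₀ ρ,
          (‖gradient f x‖ ^ (p - 2) * hessNorm n f x ^ 2 * ξ x ^ 2 +
            ‖gradient f x‖ ^ p * ‖gradient ξ x‖ ^ 2) := by
  have hosc : ∀ x ∈ tsupport ξ, |f x - f x₀| ≤ ⨆ x ∈ ball x₀ ρ, |f x - f x₀| :=
    fun x hx => le_biSup_of_continuousOn (isCompact_closedBall x₀ ρ) ball_subset_closedBall
      ((hf.continuousOn.mono hsub).sub continuousOn_const).abs (hsupp hx)
  exact setIntegral_rpow_mul_sq_le_of_abs_sub_le hn hp hU (isCompact_closedBall x₀ ρ) hsub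
    measurableSet_ball ball_subset_closedBall hf hgrad hξ hcs hsupp
    (Real.iSup_nonneg fun _ => Real.iSup_nonneg fun _ => abs_nonneg _) hosc

/-- **Lemma 3.1** (interpolation-type inequality). If `f` is `C²` near `closedBall x₀ ρ`
with `|∇f| > 0` there, then for every `C¹` cut-off `ξ` compactly supported in `B_ρ(x₀)`:
`∫ |∇f|^{p+2} ξ² ≤ 2(√n + p)² (osc f)² ∫ [|∇f|^{p-2} |∇²f|² ξ² + |∇f|^p |∇ξ|²]`. -/
theorem statement7 (n : ℕ) (hn : 1 ≤ n) (p ρ : ℝ) (hp : 1 < p) (hρ : 0 < ρ)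
    (x₀ : Esp n) (f : Esp n → ℝ) (U : Set (Esp n)) (hU : IsOpen U)
    (hsub : closedBall x₀ ρ ⊆ U) (hf : ContDiffOn ℝ 2 f U)
    (hgrad : ∀ x ∈ closedBall x₀ ρ, gradient f x ≠ 0)
    (ξ : Esp n → ℝ) (hξ : ContDiff ℝ 1 ξ) (hcs : HasCompactSupport ξ)
    (hsupp : tsupport ξ ⊆ ball x₀ ρ) :
    (∫ x in ball x₀ ρ, ‖gradient f x‖ ^ (p + 2) * ξ x ^ 2)
      ≤ 2 * (Real.sqrt n + p) ^ 2 * (⨆ x ∈ ball x₀ ρ, |f x - f x₀|) ^ 2 *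
        ∫ x in ball x₀ ρ,
          (‖gradient f x‖ ^ (p - 2) * hessNorm n f x ^ 2 * ξ x ^ 2 +
            ‖gradient f x‖ ^ p * ‖gradient ξ x‖ ^ 2) :=
  statement7_general n hn p ρ hp x₀ f U hU hsub hf hgrad ξ hξ hcs hsupp
end
end

section
/- Let n ≥ 1 be an integer, R > 0, q > p > 0 and γ > 0, and let f : ℝⁿ → ℝ be measurable and essentially bounded on B_R. Assume that for every r ∈ (0, R) and every σ ∈ (0,1): esssup_{B_{(1−σ)r}} |f| ≤ γ (σr)^{−n/q} ( ∫_{B_r} |f|^q dx )^{1/q}. Then esssup_{B_{R/2}} |f| ≤ γ′ R^{−n/p} ( ∫_{B_R} |f|^p dx )^{1/p}, where γ′ = (p/(q−p)) · 2^{n/p} · ( 2^{n/p + 1} ((q−p)/q) γ )^{q/p}. -/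
/-!
Write `Z r` for the essential supremum of `|f|` on `B_r` and `A = ∫_{B_R} |f|^p`. On `B_r` we have
`|f|^q ≤ (Z r)^(q-p) |f|^p`, so the hypothesis gives `Z ρ ≤ γ (r - ρ)^(-n/q) A^(1/q) (Z r)^θ` for
`ρ < r < R`, with `θ = (q - p)/q < 1`. Iterating along the radii `ρ_i = R - R/2^(i+1)`, which
increase from `R/2` to `R`, the exponents `θ^i` form a geometric series and the a priori bound on
`f` is raised to the power `θ^i → 0`; in the limit `Z (R/2)` is bounded by
`(γ (R/4)^(-n/q) A^(1/q))^(q/p) 2^((n/q) θ (q/p)^2) = 2^(n/p) (2^(n/p) γ)^(q/p) R^(-n/p) A^(1/p)`.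
This differs from `γ′ R^(-n/p) A^(1/p)` by the factor `(p/(q-p)) (2θ)^(q/p)`, which is at least
one by convexity of `x log x`.
-/

open MeasureTheory Metric Real
open scoped InnerProductSpace Topology
open Filter

noncomputable section

open Finset in
theorem le_rpow_of_le_mul_pow_mul_rpow {Y : ℕ → ℝ} {C b θ M : ℝ} (hY : ∀ i, 0 ≤ Y i)
    (hYM : ∀ i, Y i ≤ M) (hC : 0 ≤ C) (hb : 0 < b) (hθ₀ : 0 ≤ θ) (hθ₁ : θ < 1)
    (hrec : ∀ i, Y i ≤ C * b ^ i * Y (i + 1) ^ θ) :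
    Y 0 ≤ C ^ (1 - θ)⁻¹ * b ^ (θ / (1 - θ) ^ 2) := by
  rcases hC.eq_or_lt with rfl | hC
  · simpa [zero_rpow (inv_ne_zero (sub_ne_zero.2 hθ₁.ne'))] using hrec 0
  have hpartial : ∀ k, Y 0 ≤ C ^ (∑ i ∈ range k, θ ^ i) *
      b ^ (∑ i ∈ range k, (i : ℝ) * θ ^ i) * Y k ^ (θ ^ k) := by
    intro k
    induction k with
    | zero => simp
    | succ k ih =>
      have hθk : 0 ≤ θ ^ k := pow_nonneg hθ₀ k
      have hYk := hY (k + 1)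
      calc Y 0 ≤ C ^ (∑ i ∈ range k, θ ^ i) *
            b ^ (∑ i ∈ range k, (i : ℝ) * θ ^ i) * Y k ^ (θ ^ k) := ih
        _ ≤ C ^ (∑ i ∈ range k, θ ^ i) * b ^ (∑ i ∈ range k, (i : ℝ) * θ ^ i) *
            (C * b ^ k * Y (k + 1) ^ θ) ^ (θ ^ k) := by
          gcongr
          exacts [hY k, hrec k]
        _ = _ := by
          rw [mul_rpow (by positivity) (by positivity), mul_rpow hC.le (by positivity),
            ← rpow_natCast b k, ← rpow_mul hb.le, ← rpow_mul hYk, sum_range_succ, sum_range_succ,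
            rpow_add hC, rpow_add hb, pow_succ']
          ring
  set M' := max M 1
  have hbound : ∀ k, Y 0 ≤ C ^ (∑ i ∈ range k, θ ^ i) *
      b ^ (∑ i ∈ range k, (i : ℝ) * θ ^ i) * M' ^ (θ ^ k) := fun k =>
    (hpartial k).trans (by gcongr; exacts [hY k, (hYM k).trans (le_max_left _ _)])
  have hlim : Tendsto (fun k => C ^ (∑ i ∈ range k, θ ^ i) *
      b ^ (∑ i ∈ range k, (i : ℝ) * θ ^ i) * M' ^ (θ ^ k)) atTop
      (𝓝 (C ^ (1 - θ)⁻¹ * b ^ (θ / (1 - θ) ^ 2) * M' ^ (0 : ℝ))) := by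
    have hS := (hasSum_geometric_of_lt_one hθ₀ hθ₁).tendsto_sum_nat
    have hT := (hasSum_coe_mul_geometric_of_norm_lt_one
      (by rwa [norm_of_nonneg hθ₀])).tendsto_sum_nat
    have hθk := tendsto_pow_atTop_nhds_zero_of_lt_one hθ₀ hθ₁
    exact ((tendsto_const_nhds.rpow hS (Or.inl hC.ne')).mul
      (tendsto_const_nhds.rpow hT (Or.inl hb.ne'))).mul
      (tendsto_const_nhds.rpow hθk (Or.inl (by positivity)))
  rw [rpow_zero, mul_one] at hlim
  exact ge_of_tendsto' hlim hbound

theorem rpow_le_rpow_sub_mul_rpow {a z p q : ℝ} (ha : 0 ≤ a) (haz : a ≤ z) (hpq : p ≤ q)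
    (hq : q ≠ 0) : a ^ q ≤ z ^ (q - p) * a ^ p :=
  calc a ^ q = a ^ (q - p) * a ^ p := by rw [← rpow_add' ha (by simpa using hq), sub_add_cancel]
    _ ≤ z ^ (q - p) * a ^ p := by gcongr

section EssSup

variable {α : Type*} [MeasurableSpace α] {μ : Measure α} {f : α → ℝ} {M : ℝ}

theorem essSup_abs_nonneg [NeZero μ] (hM : ∀ᵐ x ∂μ, |f x| ≤ M) :
    0 ≤ essSup (fun x => |f x|) μ := by
  obtain ⟨x, hx⟩ := (ae_le_essSup (isBoundedUnder_of_eventually_le hM)).exists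
  exact (abs_nonneg _).trans hx

theorem essSup_abs_le [NeZero μ] (hM : ∀ᵐ x ∂μ, |f x| ≤ M) :
    essSup (fun x => |f x|) μ ≤ M :=
  essSup_le_of_ae_le M hM (isCoboundedUnder_le_of_le _ fun x => abs_nonneg (f x))

theorem integrable_abs_rpow_of_ae_abs_le [IsFiniteMeasure μ] (hf : AEStronglyMeasurable f μ)
    (hM : ∀ᵐ x ∂μ, |f x| ≤ M) {s : ℝ} (hs : 0 ≤ s) : Integrable (fun x => |f x| ^ s) μ :=
  .of_bound (hf.norm.aemeasurable.pow_const s).aestronglyMeasurable (M ^ s) <|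
    hM.mono fun x hx => by
      rw [norm_of_nonneg (by positivity)]
      exact rpow_le_rpow (abs_nonneg _) hx hs

theorem integral_abs_rpow_le_essSup_rpow_mul_integral [IsFiniteMeasure μ]
    (hf : AEStronglyMeasurable f μ) (hM : ∀ᵐ x ∂μ, |f x| ≤ M) {p q : ℝ} (hp : 0 < p)
    (hpq : p ≤ q) :
    ∫ x, |f x| ^ q ∂μ ≤ essSup (fun x => |f x|) μ ^ (q - p) * ∫ x, |f x| ^ p ∂μ := by
  rw [← integral_const_mul]
  refine integral_mono_ae (integrable_abs_rpow_of_ae_abs_le hf hM (hp.le.trans hpq))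
    ((integrable_abs_rpow_of_ae_abs_le hf hM hp.le).const_mul _) ?_
  filter_upwards [ae_le_essSup (isBoundedUnder_of_eventually_le hM)] with x hx
  exact rpow_le_rpow_sub_mul_rpow (abs_nonneg _) hx hpq (hp.trans_le hpq).ne'

end EssSup

theorem div_two_pow_rpow_neg_div {x : ℝ} (hx : 0 ≤ x) (s t : ℝ) (i : ℕ) :
    (x / 2 ^ i) ^ (-s / t) = x ^ (-s / t) * ((2 : ℝ) ^ (s / t)) ^ i := by
  rw [div_rpow hx (by positivity), neg_div, rpow_neg (pow_nonneg zero_le_two i), div_inv_eq_mul,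
    rpow_pow_comm zero_le_two]

section Ball

variable {X : Type*} [PseudoMetricSpace X] [MeasurableSpace X] [ProperSpace X] {μ : Measure X}
  [IsFiniteMeasureOnCompacts μ] [μ.IsOpenPosMeasure] {x₀ : X} {f : X → ℝ} {R M p q γ d : ℝ}

def SupBoundByLq (μ : Measure X) (x₀ : X) (R γ d q : ℝ) (f : X → ℝ) : Prop :=
  ∀ r ∈ Set.Ioo (0 : ℝ) R, ∀ σ ∈ Set.Ioo (0 : ℝ) 1,
    essSup (fun x => |f x|) (μ.restrict (ball x₀ ((1 - σ) * r))) ≤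
      γ * (σ * r) ^ (-d / q) * (∫ x in ball x₀ r, |f x| ^ q ∂μ) ^ (1 / q)

theorem essSup_ball_le_mul_essSup_ball_rpow
    (hf : AEStronglyMeasurable f (μ.restrict (ball x₀ R)))
    (hM : ∀ᵐ x ∂μ.restrict (ball x₀ R), |f x| ≤ M) (hsup : SupBoundByLq μ x₀ R γ d q f)
    (hp : 0 < p) (hpq : p < q) (hγ : 0 ≤ γ) {ρ r : ℝ} (hρ : 0 < ρ) (hρr : ρ < r) (hr : r < R) :
    essSup (fun x => |f x|) (μ.restrict (ball x₀ ρ)) ≤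
      γ * (r - ρ) ^ (-d / q) * (∫ x in ball x₀ R, |f x| ^ p ∂μ) ^ (1 / q) *
        essSup (fun x => |f x|) (μ.restrict (ball x₀ r)) ^ ((q - p) / q) := by
  have hq : 0 < q := hp.trans hpq
  have hr₀ : 0 < r := hρ.trans hρr
  have hsub : ball x₀ r ⊆ ball x₀ R := ball_subset_ball hr.le
  have : IsFiniteMeasure (μ.restrict (ball x₀ R)) :=
    isFiniteMeasure_restrict.2 measure_ball_lt_top.ne
  have : IsFiniteMeasure (μ.restrict (ball x₀ r)) :=
    isFiniteMeasure_restrict.2 measure_ball_lt_top.ne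
  have : NeZero (μ (ball x₀ r)) := ⟨(measure_ball_pos μ x₀ hr₀).ne'⟩
  have hMr := ae_restrict_of_ae_restrict_of_subset hsub hM
  have hZr := essSup_abs_nonneg hMr
  have hσ : (r - ρ) / r ∈ Set.Ioo (0 : ℝ) 1 :=
    ⟨div_pos (sub_pos.2 hρr) hr₀, (div_lt_one hr₀).2 (by linarith)⟩
  have hstep := hsup r ⟨hr₀, hr⟩ _ hσ
  rw [sub_mul, div_mul_cancel₀ _ hr₀.ne', one_mul, sub_sub_cancel] at hstep
  have hint : ∫ x in ball x₀ r, |f x| ^ q ∂μ ≤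
      essSup (fun x => |f x|) (μ.restrict (ball x₀ r)) ^ (q - p) *
        ∫ x in ball x₀ R, |f x| ^ p ∂μ :=
    (integral_abs_rpow_le_essSup_rpow_mul_integral (hf.mono_set hsub) hMr hp hpq.le).trans <|
      mul_le_mul_of_nonneg_left (setIntegral_mono_set
        (integrable_abs_rpow_of_ae_abs_le hf hM hp.le) (.of_forall fun x => by positivity)
        hsub.eventuallyLE) (by positivity)
  calc _ ≤ _ := hstep
    _ ≤ γ * (r - ρ) ^ (-d / q) * (essSup (fun x => |f x|) (μ.restrict (ball x₀ r)) ^ (q - p) *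
        ∫ x in ball x₀ R, |f x| ^ p ∂μ) ^ (1 / q) := by gcongr
    _ = _ := by
      rw [mul_rpow (by positivity) (integral_nonneg fun x => by positivity), ← rpow_mul hZr,
        mul_one_div]
      ring

theorem essSup_ball_half_le (hf : AEStronglyMeasurable f (μ.restrict (ball x₀ R)))
    (hM : ∀ᵐ x ∂μ.restrict (ball x₀ R), |f x| ≤ M) (hsup : SupBoundByLq μ x₀ R γ d q f)
    (hp : 0 < p) (hpq : p < q) (hγ : 0 ≤ γ) (hR : 0 < R) :
    essSup (fun x => |f x|) (μ.restrict (ball x₀ (R / 2))) ≤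
      (γ * (R / 4) ^ (-d / q) * (∫ x in ball x₀ R, |f x| ^ p ∂μ) ^ (1 / q)) ^
          (1 - (q - p) / q)⁻¹ *
        ((2 : ℝ) ^ (d / q)) ^ ((q - p) / q / (1 - (q - p) / q) ^ 2) := by
  have hq : 0 < q := hp.trans hpq
  set ρ : ℕ → ℝ := fun i => R - R / 2 ^ (i + 1) with hρ
  have hρ₀ (i : ℕ) : 0 < ρ i := by
    have : R / 2 ^ (i + 1) < R := div_lt_self hR (one_lt_pow₀ one_lt_two (by omega))
    simp only [hρ]; linarith
  have hρR (i : ℕ) : ρ i < R := by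
    simp only [hρ]; linarith [show 0 < R / 2 ^ (i + 1) by positivity]
  have hgap (i : ℕ) : ρ (i + 1) - ρ i = R / 4 / 2 ^ i := by simp only [hρ]; field_simp; ring
  have hball (i : ℕ) : NeZero (μ.restrict (ball x₀ (ρ i))) :=
    have : NeZero (μ (ball x₀ (ρ i))) := ⟨(measure_ball_pos μ x₀ (hρ₀ i)).ne'⟩
    inferInstance
  have hMρ (i : ℕ) := ae_restrict_of_ae_restrict_of_subset (ball_subset_ball (hρR i).le) hM
  have hstep (i : ℕ) := essSup_ball_le_mul_essSup_ball_rpow hf hM hsup hp hpq hγ (hρ₀ i)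
    (by linarith [hgap i, show 0 < R / 4 / 2 ^ i by positivity]) (hρR (i + 1))
  have hiter := le_rpow_of_le_mul_pow_mul_rpow
    (Y := fun i => essSup (fun x => |f x|) (μ.restrict (ball x₀ (ρ i))))
    (C := γ * (R / 4) ^ (-d / q) * (∫ x in ball x₀ R, |f x| ^ p ∂μ) ^ (1 / q)) (b := 2 ^ (d / q))
    (fun i => essSup_abs_nonneg (hMρ i)) (fun i => essSup_abs_le (hMρ i)) (by positivity)
    (by positivity) (div_nonneg (sub_pos.2 hpq).le hq.le) ((div_lt_one hq).2 (by linarith))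
    fun i => by
      simpa only [hgap, div_two_pow_rpow_neg_div (by positivity : 0 ≤ R / 4), ← mul_assoc,
        mul_right_comm (γ * _)] using hstep i
  have hρ0 : ρ 0 = R / 2 := by simp only [hρ]; ring
  rwa [hρ0] at hiter

end Ball

theorem half_add_one_rpow_le_rpow_self {u : ℝ} (hu : 0 < u) :
    ((u + 1) / 2) ^ (u + 1) ≤ u ^ u := by
  have hconv := convexOn_mul_log.2 (Set.mem_Ici.2 hu.le) (Set.mem_Ici.2 zero_le_one)
    (by norm_num : (0 : ℝ) ≤ 1 / 2) (by norm_num : (0 : ℝ) ≤ 1 / 2) (by norm_num)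
  simp only [smul_eq_mul, log_one, mul_zero, add_zero] at hconv
  rw [rpow_def_of_pos (by positivity), rpow_def_of_pos hu, exp_le_exp]
  rw [show 1 / 2 * u + 1 / 2 * 1 = (u + 1) / 2 by ring] at hconv
  nlinarith

theorem one_le_inv_mul_rpow {u : ℝ} (hu : 0 < u) :
    1 ≤ u⁻¹ * (2 * u / (u + 1)) ^ (u + 1) := by
  have key := half_add_one_rpow_le_rpow_self hu
  have hsplit : (2 * u / (u + 1)) ^ (u + 1) = u ^ u * u / ((u + 1) / 2) ^ (u + 1) := by
    rw [show 2 * u / (u + 1) = u / ((u + 1) / 2) by field_simp,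
      div_rpow hu.le (by positivity), rpow_add_one hu.ne']
  rw [hsplit, ← mul_div_assoc, le_div_iff₀ (by positivity), one_mul,
    mul_comm u⁻¹, mul_assoc, mul_inv_cancel₀ hu.ne', mul_one]
  exact key

theorem div_four_rpow_neg {R s : ℝ} (hR : 0 < R) : (R / 4) ^ (-s) = R ^ (-s) * 2 ^ (2 * s) := by
  rw [div_eq_mul_inv, mul_rpow hR.le (by norm_num), show (4:ℝ)⁻¹ = 2 ^ (-2 : ℝ) by norm_num,
    ← rpow_mul (by norm_num)]
  ring_nf

theorem iteration_bound_le {R A γ d p q : ℝ} (hR : 0 < R) (hA : 0 ≤ A) (hγ : 0 < γ) (hp : 0 < p)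
    (hpq : p < q) :
    (γ * (R / 4) ^ (-d / q) * A ^ (1 / q)) ^ (1 - (q - p) / q)⁻¹ *
        ((2 : ℝ) ^ (d / q)) ^ ((q - p) / q / (1 - (q - p) / q) ^ 2) ≤
      (p / (q - p)) * 2 ^ (d / p) * ((2 : ℝ) ^ (d / p + 1) * ((q - p) / q) * γ) ^ (q / p) *
        R ^ (-d / p) * A ^ (1 / p) := by
  have hq : 0 < q := hp.trans hpq
  have hθ : 0 < (q - p) / q := div_pos (sub_pos.2 hpq) hq
  have h₁ : 1 - (q - p) / q = p / q := by field_simp; ring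
  rw [h₁, inv_div]
  set D := γ ^ (q / p) * R ^ (-d / p) * A ^ (1 / p) * 2 ^ (d / p + d / p * (q / p)) with hD
  have hLHS : (γ * (R / 4) ^ (-d / q) * A ^ (1 / q)) ^ (q / p) *
      ((2 : ℝ) ^ (d / q)) ^ ((q - p) / q / (p / q) ^ 2) = D := by
    rw [mul_rpow (by positivity) (by positivity), mul_rpow hγ.le (by positivity),
      ← rpow_mul (by positivity), ← rpow_mul hA, ← rpow_mul (by norm_num),
      show -d / q * (q / p) = -(d / p) by field_simp, div_four_rpow_neg hR,
      show 1 / q * (q / p) = 1 / p by field_simp, show -(d / p) = -d / p by ring]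
    have h₂ : (2 : ℝ) ^ (d / p + d / p * (q / p)) =
        2 ^ (2 * (d / p)) * 2 ^ (d / q * ((q - p) / q / (p / q) ^ 2)) := by
      rw [← rpow_add two_pos]
      congr 1
      field_simp
      ring
    rw [hD, h₂]
    ring
  have hRHS : (p / (q - p)) * 2 ^ (d / p) * ((2 : ℝ) ^ (d / p + 1) * ((q - p) / q) * γ) ^ (q / p) *
      R ^ (-d / p) * A ^ (1 / p) = p / (q - p) * (2 * ((q - p) / q)) ^ (q / p) * D := by
    have h₂ : ((2 : ℝ) ^ (d / p + 1)) ^ (q / p) = 2 ^ (d / p * (q / p)) * 2 ^ (q / p) := by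
      rw [← rpow_mul zero_le_two, ← rpow_add two_pos]
      ring_nf
    rw [mul_rpow (by positivity) hγ.le, mul_rpow (by positivity) hθ.le, h₂,
      mul_rpow zero_le_two hθ.le, hD, rpow_add two_pos]
    ring
  rw [hLHS, hRHS]
  refine le_mul_of_one_le_left (by positivity) ?_
  have hu : 0 < (q - p) / p := div_pos (sub_pos.2 hpq) hp
  have e₁ : 2 * ((q - p) / q) = 2 * ((q - p) / p) / (q / p) := by field_simp
  have e₂ : q / p = (q - p) / p + 1 := by field_simp; ring
  rw [← inv_div, e₁, e₂]
  exact one_le_inv_mul_rpow hu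

theorem statement8_general (n : ℕ) (R p q γ : ℝ) (hR : 0 < R) (hp : 0 < p)
    (hpq : p < q) (hγ : 0 < γ) (f : Esp n → ℝ) (hmeas : Measurable f)
    (hbdd : ∃ M : ℝ, ∀ᵐ x ∂(volume.restrict (ball (0 : Esp n) R)), |f x| ≤ M)
    (hiter : ∀ r ∈ Set.Ioo (0 : ℝ) R, ∀ σ ∈ Set.Ioo (0 : ℝ) 1,
      essSup (fun x => |f x|) (volume.restrict (ball (0 : Esp n) ((1 - σ) * r)))
        ≤ γ * (σ * r) ^ (-(n : ℝ) / q) *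
            (∫ x in ball (0 : Esp n) r, |f x| ^ q) ^ (1 / q)) :
    essSup (fun x => |f x|) (volume.restrict (ball (0 : Esp n) (R / 2)))
      ≤ (p / (q - p)) * 2 ^ ((n : ℝ) / p) *
          ((2 : ℝ) ^ ((n : ℝ) / p + 1) * ((q - p) / q) * γ) ^ (q / p) *
          R ^ (-(n : ℝ) / p) * (∫ x in ball (0 : Esp n) R, |f x| ^ p) ^ (1 / p) := by
  obtain ⟨M, hM⟩ := hbdd
  exact (essSup_ball_half_le hmeas.aestronglyMeasurable hM hiter hp hpq hγ.le hR).trans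
    (iteration_bound_le hR (integral_nonneg fun x => by positivity) hγ hp hpq)

/-- **Lemma 3.2.** If `f` is measurable and essentially bounded on `B_R` and
`esssup_{B_{(1-σ)r}} |f| ≤ γ (σr)^{-n/q} (∫_{B_r} |f|^q)^{1/q}` for all `r ∈ (0,R)`,
`σ ∈ (0,1)`, then `esssup_{B_{R/2}} |f| ≤ γ′ R^{-n/p} (∫_{B_R} |f|^p)^{1/p}` where
`γ′ = (p/(q-p)) 2^{n/p} (2^{n/p+1} ((q-p)/q) γ)^{q/p}`. -/
theorem statement8 (n : ℕ) (hn : 1 ≤ n) (R p q γ : ℝ) (hR : 0 < R) (hp : 0 < p)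
    (hpq : p < q) (hγ : 0 < γ) (f : Esp n → ℝ) (hmeas : Measurable f)
    (hbdd : ∃ M : ℝ, ∀ᵐ x ∂(volume.restrict (ball (0 : Esp n) R)), |f x| ≤ M)
    (hiter : ∀ r ∈ Set.Ioo (0 : ℝ) R, ∀ σ ∈ Set.Ioo (0 : ℝ) 1,
      essSup (fun x => |f x|) (volume.restrict (ball (0 : Esp n) ((1 - σ) * r)))
        ≤ γ * (σ * r) ^ (-(n : ℝ) / q) *
            (∫ x in ball (0 : Esp n) r, |f x| ^ q) ^ (1 / q)) :
    essSup (fun x => |f x|) (volume.restrict (ball (0 : Esp n) (R / 2)))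
      ≤ (p / (q - p)) * 2 ^ ((n : ℝ) / p) *
          ((2 : ℝ) ^ ((n : ℝ) / p + 1) * ((q - p) / q) * γ) ^ (q / p) *
          R ^ (-(n : ℝ) / p) * (∫ x in ball (0 : Esp n) R, |f x| ^ p) ^ (1 / p) :=
  statement8_general n R p q γ hR hp hpq hγ f hmeas hbdd hiter
end
end

section
/- Let n ≥ 1 be an integer, R > 0, p > 0 and γ > 0, and let f : ℝⁿ → ℝ be measurable and essentially bounded on B_R. Assume that for every r ∈ (0, R) and every σ ∈ (0,1): esssup_{B_{(1−σ)r}} |f| ≤ γ (σr)^{−n/(2p)} ( ∫_{B_r} |f|^{2p} dx )^{1/(2p)}. Then esssup_{B_{R/2}} |f| ≤ 8^{n/p} γ² R^{−n/p} ( ∫_{B_R} |f|^p dx )^{1/p}. -/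
/-!
Write `M ρ` for the essential supremum of `|f|` on `B_ρ` and `I = ∫_{B_R} |f|^p`. Since
`|f|^{2p} ≤ M(r)^p |f|^p` a.e. on `B_r`, the hypothesis becomes the self-improving estimate
`M ρ ≤ γ I^{1/(2p)} (r - ρ)^{-n/(2p)} √(M r)` for `0 < ρ < r < R`. Iterating it along the radii
`r_k = R - R 2^{-(k+1)}` and taking logarithms bounds `log M(R/2)` by `∑ 2^{-j} c_j` with `c_j`
affine in `j`, up to a remainder `2^{-k} log M(r_k)` that vanishes because `f` is bounded on
`B_R`. Summing the series produces the constant `8^{n/p}`.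
-/

open MeasureTheory Metric Real
open scoped InnerProductSpace Topology

noncomputable section

open Filter Set

theorem le_of_le_add_mul_succ_of_hasSum {L c : ℕ → ℝ} {θ s B : ℝ} (hθ₀ : 0 ≤ θ) (hθ₁ : θ < 1)
    (hc : HasSum (fun j => θ ^ j * c j) s) (hB : ∀ k, L k ≤ B)
    (hL : ∀ k, L k ≤ c k + θ * L (k + 1)) : L 0 ≤ s := by
  have unrolled : ∀ k, L 0 ≤ ∑ j ∈ Finset.range k, θ ^ j * c j + θ ^ k * L k := by
    intro k
    induction k with
    | zero => simp
    | succ k ih =>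
      have := mul_le_mul_of_nonneg_left (hL k) (pow_nonneg hθ₀ k)
      rw [Finset.sum_range_succ, pow_succ]
      linarith
  have hlim : Tendsto (fun k => ∑ j ∈ Finset.range k, θ ^ j * c j + θ ^ k * B) atTop (𝓝 s) := by
    simpa using hc.tendsto_sum_nat.add
      ((tendsto_pow_atTop_nhds_zero_of_lt_one hθ₀ hθ₁).mul_const B)
  refine ge_of_tendsto hlim (Eventually.of_forall fun k => ?_)
  linarith [unrolled k, mul_le_mul_of_nonneg_left (hB k) (pow_nonneg hθ₀ k)]

theorem hasSum_half_pow_mul_add_mul (a b : ℝ) :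
    HasSum (fun j : ℕ => (1 / 2 : ℝ) ^ j * (a + b * j)) (2 * a + 2 * b) := by
  have hj : HasSum (fun j : ℕ => (j : ℝ) * (1 / 2) ^ j) 2 := by
    have := hasSum_coe_mul_geometric_of_norm_lt_one (𝕜 := ℝ) (r := 1 / 2)
      (by norm_num [Real.norm_eq_abs])
    norm_num at this
    exact this
  rw [show 2 * a + 2 * b = a * 2 + b * 2 by ring]
  exact ((hasSum_geometric_two.mul_left a).add (hj.mul_left b)).congr_fun fun j => by ring

theorem le_sq_mul_rpow_of_le_mul_rpow_mul_sqrt {φ : ℝ → ℝ} {R D a B : ℝ} (hR : 0 < R)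
    (hB : ∀ r ∈ Ico (R / 2) R, φ r ≤ B)
    (hstep : ∀ ρ r, R / 2 ≤ ρ → ρ < r → r < R → φ ρ ≤ D * (r - ρ) ^ a * √(φ r)) :
    φ (R / 2) ≤ D ^ 2 * (R / 8) ^ (2 * a) := by
  set r : ℕ → ℝ := fun k => R - R * (1 / 2) ^ (k + 1) with hr
  have hr_zero : r 0 = R / 2 := by simp only [hr]; ring
  have hr_gap : ∀ k, r (k + 1) - r k = R * (1 / 2) ^ (k + 2) := fun k => by simp only [hr]; ring
  have hr_mem : ∀ k, r k ∈ Ico (R / 2) R := fun k => by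
    have : (1 / 2 : ℝ) ^ (k + 1) ≤ 1 / 2 := pow_le_of_le_one (by norm_num) (by norm_num) (by omega)
    constructor <;> simp only [hr] <;> nlinarith [pow_pos (by norm_num : (0 : ℝ) < 1 / 2) (k + 1)]
  have step : ∀ k, φ (r k) ≤ D * (R * (1 / 2) ^ (k + 2)) ^ a * √(φ (r (k + 1))) := fun k => by
    rw [← hr_gap]
    refine hstep _ _ (hr_mem k).1 ?_ (hr_mem (k + 1)).2
    linarith [hr_gap k, mul_pos hR (pow_pos (by norm_num : (0 : ℝ) < 1 / 2) (k + 2))]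
  rcases le_or_gt (φ (R / 2)) 0 with hφ | hφ
  · exact hφ.trans (by positivity)
  -- once `φ (R / 2) > 0`, the recursion keeps every `φ (r k)` positive, so logarithms can be taken
  have hpos : ∀ k, 0 < φ (r k) := by
    intro k
    induction k with
    | zero => rwa [hr_zero]
    | succ k ih =>
      have h := ih.trans_le (step k)
      refine Real.sqrt_pos.1 ((Real.sqrt_nonneg _).lt_of_ne fun h0 => ?_)
      rw [← h0, mul_zero] at h
      exact h.false
  have hD : 0 < D := pos_of_mul_pos_left
    (pos_of_mul_pos_left ((hpos 0).trans_le (step 0)) (Real.sqrt_nonneg _)) (by positivity)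
  -- `c₀ + c₁ * k = log (D * (R * 2⁻¹ ^ (k + 2)) ^ a)`
  set c₀ := Real.log D + a * Real.log R - 2 * a * Real.log 2
  set c₁ := -(a * Real.log 2)
  have hlog_step : ∀ k, Real.log (φ (r k)) ≤
      c₀ + c₁ * k + 1 / 2 * Real.log (φ (r (k + 1))) := fun k => by
    have ht : 0 < R * (1 / 2 : ℝ) ^ (k + 2) := by positivity
    have h := Real.log_le_log (hpos k) (step k)
    rw [Real.log_mul (by positivity) (Real.sqrt_pos.2 (hpos (k + 1))).ne',
      Real.log_mul hD.ne' (by positivity), Real.log_rpow ht, Real.log_sqrt (hpos (k + 1)).le,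
      Real.log_mul hR.ne' (by positivity), Real.log_pow, one_div, Real.log_inv] at h
    push_cast at h
    linarith
  have hlog := le_of_le_add_mul_succ_of_hasSum (L := fun k => Real.log (φ (r k)))
    (by norm_num) (by norm_num) (hasSum_half_pow_mul_add_mul c₀ c₁)
    (fun k => Real.log_le_log (hpos k) (hB _ (hr_mem k))) hlog_step
  rw [← Real.log_le_log_iff hφ (by positivity), Real.log_mul (by positivity) (by positivity),
    Real.log_pow, Real.log_rpow (by positivity), Real.log_div hR.ne' (by norm_num),
    show (8 : ℝ) = 2 ^ 3 by norm_num, Real.log_pow, ← hr_zero]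
  push_cast
  linarith

section AEBounded

variable {α : Type*} [MeasurableSpace α] {μ : Measure α} {g : α → ℝ} {B : ℝ}

theorem essSup_nonneg_of_nonneg (hμ : μ ≠ 0) (hg : 0 ≤ g) (hB : ∀ᵐ x ∂μ, g x ≤ B) :
    0 ≤ essSup g μ :=
  haveI := ae_neBot.2 hμ
  le_limsup_of_frequently_le (Frequently.of_forall hg) ⟨B, hB⟩

theorem essSup_le_of_nonneg_of_ae_le (hμ : μ ≠ 0) (hg : 0 ≤ g) (hB : ∀ᵐ x ∂μ, g x ≤ B) :
    essSup g μ ≤ B :=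
  haveI := ae_neBot.2 hμ
  essSup_le_of_ae_le B hB (isCoboundedUnder_le_of_le _ hg)

theorem setIntegral_rpow_add_le_mul {s t : Set α} {m p q : ℝ} (hst : s ⊆ t) (hg : 0 ≤ g)
    (hm₀ : 0 ≤ m) (hm : ∀ᵐ x ∂μ.restrict s, g x ≤ m) (hp : 0 ≤ p) (hq : 0 ≤ q)
    (hint : IntegrableOn (fun x => g x ^ p) t μ) :
    ∫ x in s, g x ^ (q + p) ∂μ ≤ m ^ q * ∫ x in t, g x ^ p ∂μ := by
  have hmg : ∀ x, 0 ≤ m ^ q * g x ^ p := fun x =>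
    mul_nonneg (Real.rpow_nonneg hm₀ q) (Real.rpow_nonneg (hg x) p)
  calc ∫ x in s, g x ^ (q + p) ∂μ ≤ ∫ x in s, m ^ q * g x ^ p ∂μ := by
        refine integral_mono_of_nonneg (Eventually.of_forall fun x => Real.rpow_nonneg (hg x) _)
          ((hint.mono_set hst).const_mul _) (hm.mono fun x hx => ?_)
        show g x ^ (q + p) ≤ m ^ q * g x ^ p
        rw [Real.rpow_add_of_nonneg (hg x) hq hp]
        exact mul_le_mul_of_nonneg_right (Real.rpow_le_rpow (hg x) hx hq)
          (Real.rpow_nonneg (hg x) p)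
    _ ≤ ∫ x in t, m ^ q * g x ^ p ∂μ :=
        setIntegral_mono_set (hint.const_mul _) (Eventually.of_forall hmg) hst.eventuallyLE
    _ = m ^ q * ∫ x in t, g x ^ p ∂μ := integral_const_mul _ _

end AEBounded

theorem essSup_ball_le_mul_rpow_mul_sqrt {E : Type*} [PseudoMetricSpace E] [MeasurableSpace E]
    {μ : Measure E} [μ.IsOpenPosMeasure] {x₀ : E} {f : E → ℝ} {R p γ a : ℝ} (hp : 0 < p)
    (hγ : 0 ≤ γ) (hbdd : ∃ M, ∀ᵐ x ∂μ.restrict (ball x₀ R), |f x| ≤ M)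
    (hint : IntegrableOn (fun x => |f x| ^ p) (ball x₀ R) μ)
    (hiter : ∀ r ∈ Ioo 0 R, ∀ σ ∈ Ioo (0 : ℝ) 1,
      essSup (fun x => |f x|) (μ.restrict (ball x₀ ((1 - σ) * r))) ≤
        γ * (σ * r) ^ a * (∫ x in ball x₀ r, |f x| ^ (2 * p) ∂μ) ^ (1 / (2 * p)))
    {ρ r : ℝ} (hρ : 0 < ρ) (hρr : ρ < r) (hr : r < R) :
    essSup (fun x => |f x|) (μ.restrict (ball x₀ ρ)) ≤
      γ * (∫ x in ball x₀ R, |f x| ^ p ∂μ) ^ (1 / (2 * p)) * (r - ρ) ^ a *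
        √(essSup (fun x => |f x|) (μ.restrict (ball x₀ r))) := by
  obtain ⟨M, hM⟩ := hbdd
  set m := essSup (fun x => |f x|) (μ.restrict (ball x₀ r))
  have hM_r : ∀ᵐ x ∂μ.restrict (ball x₀ r), |f x| ≤ M :=
    ae_restrict_of_ae_restrict_of_subset (ball_subset_ball hr.le) hM
  have hμ_r : μ.restrict (ball x₀ r) ≠ 0 := by
    rw [Ne, Measure.restrict_eq_zero]
    exact (measure_ball_pos μ x₀ (hρ.trans hρr)).ne'
  have hm₀ : 0 ≤ m := essSup_nonneg_of_nonneg hμ_r (fun x => abs_nonneg _) hM_r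
  have hintegral : ∫ x in ball x₀ r, |f x| ^ (2 * p) ∂μ ≤
      m ^ p * ∫ x in ball x₀ R, |f x| ^ p ∂μ := by
    rw [two_mul]
    exact setIntegral_rpow_add_le_mul (ball_subset_ball hr.le) (fun x => abs_nonneg _) hm₀
      (ae_le_essSup ⟨M, hM_r⟩) hp.le hp.le hint
  have hσ : (r - ρ) / r ∈ Ioo (0 : ℝ) 1 :=
    ⟨div_pos (by linarith) (by linarith), (div_lt_one (by linarith)).2 (by linarith)⟩
  have h := hiter r ⟨by linarith, hr⟩ _ hσ
  have hσr : (r - ρ) / r * r = r - ρ := div_mul_cancel₀ _ (hρ.trans hρr).ne'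
  rw [sub_mul, one_mul, hσr, sub_sub_cancel] at h
  refine h.trans ?_
  calc γ * (r - ρ) ^ a * (∫ x in ball x₀ r, |f x| ^ (2 * p) ∂μ) ^ (1 / (2 * p))
      ≤ γ * (r - ρ) ^ a * (m ^ p * ∫ x in ball x₀ R, |f x| ^ p ∂μ) ^ (1 / (2 * p)) := by
        gcongr
    _ = _ := by
        have hI : 0 ≤ ∫ x in ball x₀ R, |f x| ^ p ∂μ :=
          integral_nonneg fun x => Real.rpow_nonneg (abs_nonneg _) _
        rw [Real.mul_rpow (by positivity) hI, ← Real.rpow_mul hm₀, Real.sqrt_eq_rpow,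
          show p * (1 / (2 * p)) = 1 / 2 by field_simp]
        ring

theorem statement9_general (n : ℕ) (R p γ : ℝ) (hR : 0 < R) (hp : 0 < p)
    (hγ : 0 < γ) (f : Esp n → ℝ) (hmeas : Measurable f)
    (hbdd : ∃ M : ℝ, ∀ᵐ x ∂(volume.restrict (ball (0 : Esp n) R)), |f x| ≤ M)
    (hiter : ∀ r ∈ Set.Ioo (0 : ℝ) R, ∀ σ ∈ Set.Ioo (0 : ℝ) 1,
      essSup (fun x => |f x|) (volume.restrict (ball (0 : Esp n) ((1 - σ) * r)))
        ≤ γ * (σ * r) ^ (-(n : ℝ) / (2 * p)) *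
            (∫ x in ball (0 : Esp n) r, |f x| ^ (2 * p)) ^ (1 / (2 * p))) :
    essSup (fun x => |f x|) (volume.restrict (ball (0 : Esp n) (R / 2)))
      ≤ (8 : ℝ) ^ ((n : ℝ) / p) * γ ^ 2 *
          R ^ (-(n : ℝ) / p) * (∫ x in ball (0 : Esp n) R, |f x| ^ p) ^ (1 / p) := by
  obtain ⟨M, hM⟩ := hbdd
  set I := ∫ x in ball (0 : Esp n) R, |f x| ^ p
  have hint : IntegrableOn (fun x => |f x| ^ p) (ball (0 : Esp n) R) :=
    Measure.integrableOn_of_bounded measure_ball_lt_top.ne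
      (hmeas.abs.pow_const p).aestronglyMeasurable (M := M ^ p)
      (hM.mono fun x hx => by
        rw [Real.norm_of_nonneg (Real.rpow_nonneg (abs_nonneg _) _)]
        exact Real.rpow_le_rpow (abs_nonneg _) hx hp.le)
  have hM_ball : ∀ r ∈ Ico (R / 2) R,
      essSup (fun x => |f x|) (volume.restrict (ball (0 : Esp n) r)) ≤ M := fun r hr =>
    essSup_le_of_nonneg_of_ae_le
      (by rw [Ne, Measure.restrict_eq_zero]; exact (measure_ball_pos _ _ (by linarith [hr.1])).ne')
      (fun x => abs_nonneg _) (ae_restrict_of_ae_restrict_of_subset (ball_subset_ball hr.2.le) hM)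
  calc _ ≤ (γ * I ^ (1 / (2 * p))) ^ 2 * (R / 8) ^ (2 * (-(n : ℝ) / (2 * p))) :=
        le_sq_mul_rpow_of_le_mul_rpow_mul_sqrt hR hM_ball fun ρ r hρ hρr hr =>
          essSup_ball_le_mul_rpow_mul_sqrt hp hγ.le ⟨M, hM⟩ hint hiter (by linarith) hρr hr
    _ = _ := by
        have hI : 0 ≤ I := integral_nonneg fun x => Real.rpow_nonneg (abs_nonneg _) _
        rw [mul_pow, ← Real.rpow_natCast (I ^ _), ← Real.rpow_mul hI,
          Real.div_rpow hR.le (by norm_num), show 2 * (-(n : ℝ) / (2 * p)) = -(n / p) by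
            field_simp, Real.rpow_neg (by norm_num : (0 : ℝ) ≤ 8), neg_div]
        push_cast
        field_simp

/-- **Lemma 3.2, case `q = 2p`.** If `f` is measurable and essentially bounded on `B_R` and
`esssup_{B_{(1-σ)r}} |f| ≤ γ (σr)^{-n/(2p)} (∫_{B_r} |f|^{2p})^{1/(2p)}` for all `r ∈ (0,R)`,
`σ ∈ (0,1)`, then `esssup_{B_{R/2}} |f| ≤ 8^{n/p} γ² R^{-n/p} (∫_{B_R} |f|^p)^{1/p}`. -/
theorem statement9 (n : ℕ) (hn : 1 ≤ n) (R p γ : ℝ) (hR : 0 < R) (hp : 0 < p)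
    (hγ : 0 < γ) (f : Esp n → ℝ) (hmeas : Measurable f)
    (hbdd : ∃ M : ℝ, ∀ᵐ x ∂(volume.restrict (ball (0 : Esp n) R)), |f x| ≤ M)
    (hiter : ∀ r ∈ Set.Ioo (0 : ℝ) R, ∀ σ ∈ Set.Ioo (0 : ℝ) 1,
      essSup (fun x => |f x|) (volume.restrict (ball (0 : Esp n) ((1 - σ) * r)))
        ≤ γ * (σ * r) ^ (-(n : ℝ) / (2 * p)) *
            (∫ x in ball (0 : Esp n) r, |f x| ^ (2 * p)) ^ (1 / (2 * p))) :
    essSup (fun x => |f x|) (volume.restrict (ball (0 : Esp n) (R / 2)))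
      ≤ (8 : ℝ) ^ ((n : ℝ) / p) * γ ^ 2 *
          R ^ (-(n : ℝ) / p) * (∫ x in ball (0 : Esp n) R, |f x| ^ p) ^ (1 / p) :=
  statement9_general n R p γ hR hp hγ f hmeas hbdd hiter

end
end
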